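/- arXiv:1409.4331 — 2 statements merged into one kernel-verified Lean document; each statement's English description precedes it below -/
import Mathlib

section
/- For the matrix L₁ = [[2, N, 1],[0, 4, N],[0, 0, 3]] with N ≥ 4, the value max over t in the probability simplex of min_k (tᵀL₁)_k is at most 4. -/
open Matrix Finset

def inSimplex {n : ℕ} (t : Fin (n+1) → ℝ) : Prop :=
  (∀ i, 0 ≤ t i) ∧ ∑ i, t i = 1

noncomputable def minCoord {n : ℕ} (L : Matrix (Fin (n+1)) (Fin (n+1)) ℝ)
    (t : Fin (n+1) → ℝ) : ℝ :=
  univ.inf' univ_nonempty fun k => Matrix.vecMul t L k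

theorem inSimplex.le_one {n : ℕ} {t : Fin (n+1) → ℝ} (ht : inSimplex t) (i : Fin (n+1)) :
    t i ≤ 1 :=
  ht.2 ▸ single_le_sum (fun j _ => ht.1 j) (mem_univ i)

theorem minCoord_le_vecMul {n : ℕ} (L : Matrix (Fin (n+1)) (Fin (n+1)) ℝ)
    (t : Fin (n+1) → ℝ) (k : Fin (n+1)) : minCoord L t ≤ vecMul t L k :=
  inf'_le _ (mem_univ k)

theorem stmt7_general (N : ℝ) (t : Fin 3 → ℝ) (ht : inSimplex t) :
    minCoord (!![2, N, 1; 0, 4, N; 0, 0, 3] : Matrix (Fin 3) (Fin 3) ℝ) t ≤ 4 :=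
  calc minCoord !![2, N, 1; 0, 4, N; 0, 0, 3] t
      ≤ vecMul t !![2, N, 1; 0, 4, N; 0, 0, 3] 0 := minCoord_le_vecMul _ t 0
    _ = 2 * t 0 := by simp [vecMul, dotProduct, Fin.sum_univ_three, mul_comm]
    _ ≤ 4 := by linarith [ht.le_one 0]

theorem stmt7 (N : ℝ) (hN : 4 ≤ N) (t : Fin 3 → ℝ) (ht : inSimplex t) :
    minCoord (!![2, N, 1; 0, 4, N; 0, 0, 3] : Matrix (Fin 3) (Fin 3) ℝ) t ≤ 4 :=
  stmt7_general N t ht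
end

section
/- Let N be a finite set of players, A a finite set of coalition indices, and for each player j a strategy s_j ∈ A. For a strategy profile s, let C_a(s) = {j : s_j = a}. Suppose each player j has a utility u_j(C) depending only on the coalition set C containing j and the index a. Define the repercussion utility r_j(s) = u_j(C_{s_j}(s)) − Σ_{i ∈ C_{s_j}(s), i ≠ j} [u_i(C_{s_j}(s) \ {j}) − u_i(C_{s_j}(s))], and the social welfare W(s) = Σ_j u_j(C_{s_j}(s)). Then for any player j and any two strategies p, q ∈ A (with other players' strategies s_{−j} fixed), r_j(p, s_{−j}) − r_j(q, s_{−j}) = W(p, s_{−j}) − W(q, s_{−j}). -/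
open Finset

variable {ι A : Type*}

def coalOf [Fintype ι] [DecidableEq A] (s : ι → A) (a : A) : Finset ι :=
  univ.filter fun i => s i = a

noncomputable def welfare [Fintype ι] [DecidableEq A]
    (u : ι → A → Finset ι → ℝ) (s : ι → A) : ℝ :=
  ∑ j, u j (s j) (coalOf s (s j))

noncomputable def reper [Fintype ι] [DecidableEq ι] [DecidableEq A]
    (u : ι → A → Finset ι → ℝ) (s : ι → A) (j : ι) : ℝ :=
  u j (s j) (coalOf s (s j)) -
    ∑ i ∈ (coalOf s (s j)).erase j,
      (u i (s j) ((coalOf s (s j)).erase j) - u i (s j) (coalOf s (s j)))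

/-!
Only player `j`'s own coalition feels `j`'s presence, so
`W(s) - r_j(s) = ∑_{i ≠ j} u_i(C_{s_i}(s) \ {j})`: the welfare of the others once `j` has left,
which does not depend on `s_j`.
-/

section

variable [Fintype ι] [DecidableEq ι] [DecidableEq A]

lemma coalOf_update_erase (s : ι → A) (j : ι) (p a : A) :
    (coalOf (Function.update s j p) a).erase j = (coalOf s a).erase j := by
  ext i
  by_cases hij : i = j
  · simp [hij]
  · simp [coalOf, hij]

noncomputable def welfareWithout (u : ι → A → Finset ι → ℝ) (s : ι → A) (j : ι) : ℝ :=
  ∑ i ∈ univ.erase j, u i (s i) ((coalOf s (s i)).erase j)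

lemma welfareWithout_update (u : ι → A → Finset ι → ℝ) (s : ι → A) (j : ι) (p : A) :
    welfareWithout u (Function.update s j p) j = welfareWithout u s j := by
  refine sum_congr rfl fun i hi => ?_
  rw [Function.update_of_ne (ne_of_mem_erase hi), coalOf_update_erase]

lemma sum_sub_sum_coalOf_erase (u : ι → A → Finset ι → ℝ) (s : ι → A) (j : ι) :
    ∑ i ∈ univ.erase j,
        (u i (s i) (coalOf s (s i)) - u i (s i) ((coalOf s (s i)).erase j)) =
      ∑ i ∈ (coalOf s (s j)).erase j,
        (u i (s j) (coalOf s (s j)) - u i (s j) ((coalOf s (s j)).erase j)) := by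
  have hsub : (coalOf s (s j)).erase j ⊆ univ.erase j := erase_subset_erase j (subset_univ _)
  rw [← sum_subset hsub fun i hij hi => ?_]
  · refine sum_congr rfl fun i hi => ?_
    rw [(mem_filter.mp (mem_of_mem_erase hi)).2]
  · have hne : s j ≠ s i := fun h => hi (mem_erase.mpr ⟨ne_of_mem_erase hij, by simp [coalOf, h]⟩)
    rw [erase_eq_of_notMem (by simp [coalOf, hne]), sub_self]

lemma welfare_sub_reper (u : ι → A → Finset ι → ℝ) (s : ι → A) (j : ι) :
    welfare u s - reper u s j = welfareWithout u s j := by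
  have hsplit := sum_sub_sum_coalOf_erase u s j
  rw [sum_sub_distrib, sum_sub_distrib] at hsplit
  rw [welfare, reper, welfareWithout, ← add_sum_erase univ _ (mem_univ j), sum_sub_distrib]
  linarith

end

theorem stmt11_general [Fintype ι] [DecidableEq ι] [DecidableEq A]
    (u : ι → A → Finset ι → ℝ) (s : ι → A) (j : ι) (p q : A) :
    reper u (Function.update s j p) j - reper u (Function.update s j q) j =
      welfare u (Function.update s j p) - welfare u (Function.update s j q) := by
  have hp := welfare_sub_reper u (Function.update s j p) j
  have hq := welfare_sub_reper u (Function.update s j q) j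
  rw [welfareWithout_update] at hp hq
  linarith

theorem stmt11 [Fintype ι] [DecidableEq ι] [Fintype A] [DecidableEq A]
    (u : ι → A → Finset ι → ℝ) (s : ι → A) (j : ι) (p q : A) :
    reper u (Function.update s j p) j - reper u (Function.update s j q) j =
      welfare u (Function.update s j p) - welfare u (Function.update s j q) :=
  stmt11_general u s j p q
end
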